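/- Let n ≥ 2 and let L_n be the n-element MV-chain modeled on {0,1,…,n−1}, let v = n−2 be the coatom and let 1 denote the top element n−1. Suppose d : L_n → L_n is a map with d(v) ≤ v. Then d is an (⊙,∨)-derivation on L_n if and only if: (1) d(v^{⊙m}) = v^{⊙(m−1)} ⊙ d(v) for every m ∈ {1, 2, …, n−1}, where v^{⊙0} = n−1 and v^{⊙k} is the k-fold ⊙-power of v; and (2) v ⊙ d(n−1) ≤ d(v). -/
import Mathlib


/-- Łukasiewicz conjunction on the n-element MV-chain modeled on `Fin n`:
`a ⊙ b = (a + b) ∸ (n - 1)` (truncated subtraction). -/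
def codot {n : ℕ} (a b : Fin n) : Fin n :=
  ⟨a.1 + b.1 - (n - 1), by have ha := a.2; have hb := b.2; omega⟩

/-- `d` is an `(⊙,∨)`-derivation on the MV-chain `Fin n`:
`d (a ⊙ b) = (d a ⊙ b) ∨ (a ⊙ d b)` for all `a, b`. -/
def IsChainDer {n : ℕ} (d : Fin n → Fin n) : Prop :=
  ∀ a b : Fin n, d (codot a b) = max (codot (d a) b) (codot a (d b))

/-- k-fold ⊙-power on Fin n, with x^(⊙0) the top element n - 1. -/
def cpow {n : ℕ} (hn : 0 < n) (x : Fin n) : ℕ → Fin n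
  | 0 => ⟨n - 1, by omega⟩
  | k + 1 => codot (cpow hn x k) x

theorem finValMax {n : ℕ} (a b : Fin n) : (max a b).1 = max a.1 b.1 := by
  rcases le_total a b with h | h
  · rw [max_eq_right h, max_eq_right (Fin.le_def.mp h)]
  · rw [max_eq_left h, max_eq_left (Fin.le_def.mp h)]

/-- for the coatom v = n-2 of the n-element MV-chain and a map d
with d v ≤ v, d is an (⊙,∨)-derivation iff (1) d(v^{⊙m}) = v^{⊙(m-1)} ⊙ d v for
every m ∈ {1,…,n-1}, and (2) v ⊙ d(n-1) ≤ d v. -/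
theorem stmt8 (n : ℕ) (hn : 2 ≤ n) (d : Fin n → Fin n)
    (hv : d ⟨n - 2, by omega⟩ ≤ (⟨n - 2, by omega⟩ : Fin n)) :
    IsChainDer d ↔
      ((∀ m : ℕ, 1 ≤ m → m ≤ n - 1 →
          d (cpow (by omega) (⟨n - 2, by omega⟩ : Fin n) m) =
            codot (cpow (by omega) (⟨n - 2, by omega⟩ : Fin n) (m - 1))
              (d ⟨n - 2, by omega⟩)) ∧
        codot (⟨n - 2, by omega⟩ : Fin n) (d ⟨n - 1, by omega⟩) ≤
          d ⟨n - 2, by omega⟩) := by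
  have h0 : 0 < n := by omega
  have pv : n - 2 < n := by omega
  have pt : n - 1 < n := by omega
  set V : Fin n := ⟨n - 2, pv⟩ with hVdef
  set T : Fin n := ⟨n - 1, pt⟩ with hTdef
  have hV1 : V.1 = n - 2 := rfl
  have hT1 : T.1 = n - 1 := rfl
  have hcd : ∀ a b : Fin n, (codot a b).1 = a.1 + b.1 - (n - 1) := fun _ _ => rfl
  have hvc : (d V).1 ≤ n - 2 := Fin.le_def.mp hv
  have hdV2 := (d V).2
  have hdT2 := (d T).2
  have hcpowval : ∀ (h : 0 < n) (m : ℕ), (cpow h V m).1 = n - 1 - m := by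
    intro h m
    induction m with
    | zero => rfl
    | succ k ih => rw [cpow, hcd, ih, hV1]; omega
  have ecp : ∀ (h : 0 < n) (k : ℕ), cpow h V (k + 1) = codot (cpow h V k) V :=
    fun h k => by rw [cpow]
  constructor
  · intro hd
    have hvt := hd V T
    rw [show codot V T = V from Fin.ext (by rw [hcd, hV1, hT1]; omega)] at hvt
    have h2 : codot V (d T) ≤ d V := by
      rw [hvt]; exact le_max_right _ _
    refine ⟨?_, h2⟩
    intro m
    induction m with
    | zero => intro hm1 _; exact absurd hm1 (by omega)
    | succ k ih =>
      intro _ hm2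
      rcases Nat.eq_zero_or_pos k with hk | hk
      · subst hk
        have e1 : ∀ h : 0 < n, cpow h V 1 = V :=
          fun h => Fin.ext (by rw [hcpowval, hV1]; omega)
        have e0 : ∀ h : 0 < n, codot (cpow h V 0) (d V) = d V :=
          fun h => Fin.ext (by rw [hcd, hcpowval]; omega)
        rw [e1, e0]
      · have hIH := ih hk (by omega)
        rw [ecp, hd (cpow h0 V k) V, hIH]
        apply Fin.ext
        rw [finValMax]
        simp only [hcd, hcpowval, hV1]
        omega
  · rintro ⟨h1, h2⟩
    have h2v : V.1 + (d T).1 - (n - 1) ≤ (d V).1 := by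
      have := Fin.le_def.mp h2
      rwa [hcd] at this
    have hdv : ∀ a : Fin n, a.1 ≤ n - 2 → (d a).1 = (d V).1 - (n - 2 - a.1) := by
      intro a ha
      have ha2 := a.2
      have hm := h1 (n - 1 - a.1) (by omega) (by omega)
      have ea : ∀ h : 0 < n, cpow h V (n - 1 - a.1) = a :=
        fun h => Fin.ext (by rw [hcpowval]; omega)
      rw [ea] at hm
      have hmv := congrArg Fin.val hm
      rw [hcd, hcpowval] at hmv
      omega
    intro a b
    have ha2 := a.2
    have hb2 := b.2
    rcases Nat.lt_or_ge a.1 (n - 1) with ha | ha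
    · rcases Nat.lt_or_ge b.1 (n - 1) with hb | hb
      · -- both below top
        have hab : (d (codot a b)).1 = (d V).1 - (n - 2 - (codot a b).1) :=
          hdv (codot a b) (by rw [hcd]; omega)
        rw [hcd] at hab
        have hda := hdv a (by omega)
        have hdb := hdv b (by omega)
        apply Fin.ext
        rw [finValMax]
        simp only [hcd]
        rw [hab, hda, hdb]
        omega
      · -- a < top, b = top
        have hbT : b = T := Fin.ext (by rw [hT1]; omega)
        subst hbT
        rw [show codot a T = a from Fin.ext (by rw [hcd, hT1]; omega)]
        have hda := hdv a (by omega)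
        have hda2 := (d a).2
        apply Fin.ext
        rw [finValMax]
        simp only [hcd]
        rw [hda]
        omega
    · have haT : a = T := Fin.ext (by rw [hT1]; omega)
      subst haT
      rcases Nat.lt_or_ge b.1 (n - 1) with hb | hb
      · -- a = top, b < top
        rw [show codot T b = b from Fin.ext (by rw [hcd, hT1]; omega)]
        have hdb := hdv b (by omega)
        have hdb2 := (d b).2
        apply Fin.ext
        rw [finValMax]
        simp only [hcd]
        rw [hdb]
        omega
      · -- both top
        have hbT : b = T := Fin.ext (by rw [hT1]; omega)
        subst hbT
        rw [show codot T T = T from Fin.ext (by rw [hcd, hT1]; omega)]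
        apply Fin.ext
        rw [finValMax]
        simp only [hcd]
        omega
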